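/- If a mechanism M satisfies (ν, τ)-Rényi differential privacy for some ν > 1, then M satisfies (τ + log(1/δ)/(ν − 1), δ)-differential privacy for every δ ∈ (0,1). -/

import Mathlib

theorem stmt_5 {D O : Type*} (N : D → D → Prop) (M : D → PMF O)
    (ν τ : ℝ) (hν : 1 < ν)
    (hRDP : ∀ X X', N X X' →
      ∑' o, (M X) o ^ ν * (M X') o ^ (1 - ν) ≤ ENNReal.ofReal (Real.exp ((ν - 1) * τ)))
    (δ : ℝ) (hδ : 0 < δ) (hδ1 : δ < 1) :
    ∀ X X', N X X' → ∀ s : Set O,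
      (M X).toOuterMeasure s ≤
        ENNReal.ofReal (Real.exp (τ + Real.log (1 / δ) / (ν - 1))) * (M X').toOuterMeasure s
          + ENNReal.ofReal δ := by
  intro X X' hN s
  set ε : ℝ := τ + Real.log (1 / δ) / (ν - 1) with hε
  set c : ENNReal := ENNReal.ofReal (Real.exp ε) with hc
  have hν0 : (0:ℝ) < ν - 1 := by linarith
  have hc0 : c ≠ 0 := (ENNReal.ofReal_pos.mpr (Real.exp_pos _)).ne'
  have hcT : c ≠ ⊤ := ENNReal.ofReal_ne_top
  set A : Set O := {o | o ∈ s ∧ c * (M X') o < (M X) o} with hA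
  -- key pointwise bound on A
  have key : ∀ o, ENNReal.ofReal (Real.exp ((ν - 1) * ε)) * A.indicator (⇑(M X)) o
      ≤ (M X) o ^ ν * (M X') o ^ (1 - ν) := by
    intro o
    by_cases ho : o ∈ A
    · rw [Set.indicator_of_mem ho]
      obtain ⟨-, hlt⟩ := ho
      have haT : (M X) o ≠ ⊤ := (M X).apply_ne_top o
      have hbT : (M X') o ≠ ⊤ := (M X').apply_ne_top o
      by_cases hb0 : (M X') o = 0
      · have ha0 : 0 < (M X) o := by
          rw [hb0, mul_zero] at hlt; exact hlt
        have : (M X') o ^ (1 - ν) = ⊤ := by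
          rw [hb0]; exact ENNReal.zero_rpow_of_neg (by linarith)
        rw [this, ENNReal.mul_top (ENNReal.rpow_pos ha0 haT).ne']
        exact le_top
      · have ha0 : (M X) o ≠ 0 := by
          intro h; rw [h] at hlt; exact (not_le.mpr hlt) zero_le
        have hstep : c ^ (ν - 1) ≤ (M X) o ^ (ν - 1) * (M X') o ^ (1 - ν) := by
          have h1 : c ^ (ν - 1) * (M X') o ^ (ν - 1) ≤ (M X) o ^ (ν - 1) := by
            rw [← ENNReal.mul_rpow_of_nonneg _ _ hν0.le]
            exact ENNReal.rpow_le_rpow hlt.le hν0.le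
          have h2 : (M X') o ^ (ν - 1) * (M X') o ^ (1 - ν) = 1 := by
            rw [← ENNReal.rpow_add _ _ hb0 hbT]
            norm_num
          calc c ^ (ν - 1) = c ^ (ν - 1) * ((M X') o ^ (ν - 1) * (M X') o ^ (1 - ν)) := by
                rw [h2, mul_one]
            _ = (c ^ (ν - 1) * (M X') o ^ (ν - 1)) * (M X') o ^ (1 - ν) := by ring
            _ ≤ (M X) o ^ (ν - 1) * (M X') o ^ (1 - ν) := mul_le_mul_left h1 _
        have hcpow : c ^ (ν - 1) = ENNReal.ofReal (Real.exp ((ν - 1) * ε)) := by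
          rw [hc, ENNReal.ofReal_rpow_of_pos (Real.exp_pos _)]
          congr 1
          rw [Real.rpow_def_of_pos (Real.exp_pos _), Real.log_exp, mul_comm]
        have hsplit : (M X) o ^ ν = (M X) o * (M X) o ^ (ν - 1) := by
          nth_rewrite 2 [← ENNReal.rpow_one ((M X) o)]
          rw [← ENNReal.rpow_add _ _ ha0 haT]
          norm_num
        calc ENNReal.ofReal (Real.exp ((ν - 1) * ε)) * (M X) o
            = (M X) o * c ^ (ν - 1) := by rw [hcpow, mul_comm]
          _ ≤ (M X) o * ((M X) o ^ (ν - 1) * (M X') o ^ (1 - ν)) := by gcongr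
          _ = (M X) o ^ ν * (M X') o ^ (1 - ν) := by rw [hsplit, mul_assoc]
    · rw [Set.indicator_of_notMem ho, mul_zero]
      exact zero_le
  -- sum over A is at most δ
  have hAsum : ∑' o, A.indicator (⇑(M X)) o ≤ ENNReal.ofReal δ := by
    have hE0 : ENNReal.ofReal (Real.exp ((ν - 1) * ε)) ≠ 0 :=
      (ENNReal.ofReal_pos.mpr (Real.exp_pos _)).ne'
    have := calc ENNReal.ofReal (Real.exp ((ν - 1) * ε)) * ∑' o, A.indicator (⇑(M X)) o
        = ∑' o, ENNReal.ofReal (Real.exp ((ν - 1) * ε)) * A.indicator (⇑(M X)) o :=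
          ENNReal.tsum_mul_left.symm
      _ ≤ ∑' o, (M X) o ^ ν * (M X') o ^ (1 - ν) := ENNReal.tsum_le_tsum key
      _ ≤ ENNReal.ofReal (Real.exp ((ν - 1) * τ)) := hRDP X X' hN
    rw [mul_comm] at this
    rw [← ENNReal.le_div_iff_mul_le (Or.inl hE0) (Or.inl ENNReal.ofReal_ne_top)] at this
    refine this.trans (le_of_eq ?_)
    rw [← ENNReal.ofReal_div_of_pos (Real.exp_pos _), ← Real.exp_sub]
    congr 1
    have : (ν - 1) * τ - (ν - 1) * ε = Real.log δ := by
      rw [hε]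
      field_simp
      rw [Real.log_div one_ne_zero hδ.ne', Real.log_one]
      ring
    rw [this, Real.exp_log hδ]
  -- main split
  rw [PMF.toOuterMeasure_apply, PMF.toOuterMeasure_apply]
  have hpt : ∀ o, s.indicator (⇑(M X)) o ≤
      A.indicator (⇑(M X)) o + c * s.indicator (⇑(M X')) o := by
    intro o
    by_cases hos : o ∈ s
    · rw [Set.indicator_of_mem hos, Set.indicator_of_mem hos]
      by_cases hoA : o ∈ A
      · rw [Set.indicator_of_mem hoA]
        exact le_add_right le_rfl
      · have : (M X) o ≤ c * (M X') o := by
          by_contra h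
          exact hoA ⟨hos, not_le.mp h⟩
        rw [Set.indicator_of_notMem hoA, zero_add]
        exact this
    · simp [Set.indicator_of_notMem hos]
  calc ∑' o, s.indicator (⇑(M X)) o
      ≤ ∑' o, (A.indicator (⇑(M X)) o + c * s.indicator (⇑(M X')) o) :=
        ENNReal.tsum_le_tsum hpt
    _ = (∑' o, A.indicator (⇑(M X)) o) + c * ∑' o, s.indicator (⇑(M X')) o := by
        rw [ENNReal.tsum_add, ENNReal.tsum_mul_left]
    _ ≤ ENNReal.ofReal δ + c * ∑' o, s.indicator (⇑(M X')) o := by gcongr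
    _ = c * (∑' o, s.indicator (⇑(M X')) o) + ENNReal.ofReal δ := by ring
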